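/- In a globally hyperbolic poset, every directed set with an upper bound has a supremum. -/

import Mathlib

open Set

/-- `a` is way below `x`. -/
def wayBelow {α : Type*} [Preorder α] (a x : α) : Prop :=
  ∀ S : Set α, S.Nonempty → DirectedOn (· ≤ ·) S → ∀ d, IsLUB S d → x ≤ d →
    ∃ s ∈ S, a ≤ s

/-- A poset is continuous if every element is the supremum of a directed set
of elements way below it. -/
def ContinuousPoset (α : Type*) [Preorder α] : Prop :=
  ∀ x : α, ∃ S : Set α, S ⊆ {a | wayBelow a x} ∧ S.Nonempty ∧
    DirectedOn (· ≤ ·) S ∧ IsLUB S x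

/-- A basis for a continuous poset. -/
def PosetBasis {α : Type*} [Preorder α] (B : Set α) : Prop :=
  ∀ x : α, ∃ S : Set α, S ⊆ B ∩ {a | wayBelow a x} ∧ S.Nonempty ∧
    DirectedOn (· ≤ ·) S ∧ IsLUB S x

/-- Scott open sets: upper sets inaccessible by directed suprema. -/
def ScottOpen {α : Type*} [Preorder α] (U : Set α) : Prop :=
  IsUpperSet U ∧ ∀ S : Set α, S.Nonempty → DirectedOn (· ≤ ·) S → ∀ d, IsLUB S d →
    d ∈ U → (S ∩ U).Nonempty

/-- The Scott topology. -/
def scottTop (α : Type*) [Preorder α] : TopologicalSpace α :=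
  TopologicalSpace.generateFrom {U | ScottOpen U}

/-- A bicontinuous poset. -/
def Bicontinuous (α : Type*) [Preorder α] : Prop :=
  ContinuousPoset α ∧
  (∀ x y : α, wayBelow x y ↔
    ∀ S : Set α, S.Nonempty → DirectedOn (· ≥ ·) S → ∀ i, IsGLB S i → i ≤ x →
      ∃ s ∈ S, s ≤ y) ∧
  (∀ x : α, DirectedOn (· ≥ ·) {y | wayBelow x y} ∧ IsGLB {y | wayBelow x y} x)

/-- The basic open intervals `(a,b) = {x | a ≪ x ≪ b}`. -/
def intervalBasis (α : Type*) [Preorder α] : Set (Set α) :=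
  {s | ∃ a b : α, s = {x | wayBelow a x ∧ wayBelow x b}}

/-- The interval topology, generated by the sets `(a,b)`. -/
def intervalTop (α : Type*) [Preorder α] : TopologicalSpace α :=
  TopologicalSpace.generateFrom (intervalBasis α)

/-- A globally hyperbolic poset: bicontinuous, with compact closed intervals. -/
def GloballyHyperbolic (α : Type*) [PartialOrder α] : Prop :=
  Bicontinuous α ∧ ∀ a b : α, @IsCompact α (intervalTop α) (Set.Icc a b)

/-- The poset of closed intervals `[a,b]`, `a ≤ b`, under reverse inclusion. -/
def IX (α : Type*) [PartialOrder α] := {p : α × α // p.1 ≤ p.2}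

instance IX.instPartialOrder {α : Type*} [PartialOrder α] : PartialOrder (IX α) where
  le x y := x.1.1 ≤ y.1.1 ∧ y.1.2 ≤ x.1.2
  le_refl x := ⟨le_refl _, le_refl _⟩
  le_trans x y z h1 h2 := ⟨h1.1.trans h2.1, h2.2.trans h1.2⟩
  le_antisymm x y h1 h2 :=
    Subtype.ext (Prod.ext_iff.mpr ⟨le_antisymm h1.1 h2.1, le_antisymm h2.2 h1.2⟩)

section Rel

variable {β : Type*}

/-- Directedness with respect to an arbitrary relation. -/
def relDirectedOn (r : β → β → Prop) (S : Set β) : Prop :=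
  ∀ x ∈ S, ∀ y ∈ S, ∃ z ∈ S, r x z ∧ r y z

/-- Least upper bound with respect to an arbitrary relation. -/
def relIsLUB (r : β → β → Prop) (S : Set β) (d : β) : Prop :=
  (∀ s ∈ S, r s d) ∧ ∀ u, (∀ s ∈ S, r s u) → r d u

/-- The way-below relation with respect to an arbitrary relation. -/
def relWayBelow (r : β → β → Prop) (a x : β) : Prop :=
  ∀ S : Set β, S.Nonempty → relDirectedOn r S → ∀ d, relIsLUB r S d → r x d →
    ∃ s ∈ S, r a s

/-- An abstract basis: a transitive relation, interpolative from the `-` direction. -/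
def AbstractBasis (r : β → β → Prop) : Prop :=
  Transitive r ∧ ∀ (F : Finset β) (x : β), (∀ y ∈ F, r y x) →
    ∃ z, (∀ y ∈ F, r y z) ∧ r z x

/-- Interpolation in the `+` direction. -/
def PlusInterpolative (r : β → β → Prop) : Prop :=
  ∀ (F : Finset β) (x : β), (∀ y ∈ F, r x y) → ∃ z, r x z ∧ (∀ y ∈ F, r z y)

/-- An ideal: a nonempty directed lower set. -/
def IsIdeal (r : β → β → Prop) (I : Set β) : Prop :=
  I.Nonempty ∧ (∀ x y, r x y → y ∈ I → x ∈ I) ∧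
    ∀ x ∈ I, ∀ y ∈ I, ∃ z ∈ I, r x z ∧ r y z

/-- The ideal completion: ideals ordered by inclusion. -/
def IdealCompletion (r : β → β → Prop) := {I : Set β // IsIdeal r I}

instance IdealCompletion.instPartialOrder {β : Type*} (r : β → β → Prop) :
    PartialOrder (IdealCompletion r) where
  le I J := I.1 ⊆ J.1
  le_refl I := subset_rfl
  le_trans I J K h1 h2 := Set.Subset.trans h1 h2
  le_antisymm I J h1 h2 := Subtype.ext (Set.Subset.antisymm h1 h2)

end Rel

/-- The order on maximal elements induced by interval endpoints. -/
def maxLe {α : Type*} (left right : α → α) (a b : α) : Prop :=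
  ∃ x, left x = a ∧ right x = b

/-- An interval poset. -/
structure IntervalPoset (α : Type*) [PartialOrder α] where
  left : α → α
  right : α → α
  left_max : ∀ x, IsMax (left x)
  right_max : ∀ x, IsMax (right x)
  glb : ∀ x, IsGLB {left x, right x} x
  glue : ∀ x y, right x = left y →
    ∃ z, IsGLB {x, y} z ∧ left z = left x ∧ right z = right y
  sub_left : ∀ x p, IsMax p → x ≤ p →
    ∃ z, IsGLB {left x, p} z ∧ left z = left x ∧ right z = p
  sub_right : ∀ x p, IsMax p → x ≤ p →
    ∃ z, IsGLB {p, right x} z ∧ left z = p ∧ right z = right x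

/-- An interval domain. -/
structure IntervalDomain (α : Type*) [PartialOrder α] extends IntervalPoset α where
  dcpo : ∀ S : Set α, S.Nonempty → DirectedOn (· ≤ ·) S → ∃ d, IsLUB S d
  cont : ContinuousPoset α
  ax1 : ∀ x p, IsMax p → wayBelow x p →
    (∀ z, IsGLB {left x, p} z → ∃ u, wayBelow z u) ∧
    (∀ z, IsGLB {p, right x} z → ∃ u, wayBelow z u)
  ax2b : ∀ x : α, (∃ u, wayBelow x u) ↔
    (∀ y, left y = left x → y ≤ x →
      relWayBelow (fun u v => u ≤ v ∧ right u = right y ∧ right v = right y) y (right y))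
  ax2c : ∀ x : α, (∃ u, wayBelow x u) ↔
    (∀ y, right y = right x → y ≤ x →
      relWayBelow (fun u v => u ≤ v ∧ left u = left y ∧ left v = left y) y (left y))
  ax3a : ∀ (p : α) (S : Set α), S.Nonempty → S ⊆ {z | left z = p} →
    DirectedOn (· ≤ ·) S → ∀ u, IsLUB S u →
      left u = p ∧ ∀ (q : α) (T : Set α), T.Nonempty → T ⊆ {z | left z = q} →
        DirectedOn (· ≤ ·) T → ∀ v, IsLUB T v → right '' T = right '' S →
          right u = right v
  ax3b : ∀ (q : α) (S : Set α), S.Nonempty → S ⊆ {z | right z = q} →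
    DirectedOn (· ≤ ·) S → ∀ u, IsLUB S u →
      right u = q ∧ ∀ (p : α) (T : Set α), T.Nonempty → T ⊆ {z | right z = p} →
        DirectedOn (· ≤ ·) T → ∀ v, IsLUB T v → left '' T = left '' S →
          left u = left v
  ax4 : ∀ x : α, @IsCompact α (scottTop α) ({y | x ≤ y} ∩ {y | IsMax y})

/-!
In the interval topology of a bicontinuous poset the principal filters `↑s` and ideals `↓u` are
closed: if `x ∉ ↑s`, the approximation `x = ⋀ {y | x ≪ y}` yields some `d ≫ x` with `d ∉ ↑s`, and
then a whole basic interval `(c, d) ∋ x` misses `↑s`; dually for `↓u` using `x = ⋁ {c | c ≪ x}`.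
Now let `S ∋ a` be directed and bounded by `b`. The sets `[a, b] ∩ lowerBounds (upperBounds S) ∩ ↑s`,
`s ∈ S`, form a directed family of nonempty closed subsets of the compact interval `[a, b]`, so they
have a common point, and any such point is the supremum of `S`.
-/

section OrderTopology

variable {α : Type*} [TopologicalSpace α] [Preorder α]

theorem isClosed_lowerBounds [ClosedIicTopology α] (s : Set α) : IsClosed (lowerBounds s) := by
  have hbiInter : lowerBounds s = ⋂ u ∈ s, Iic u := by ext; simp [lowerBounds]
  exact hbiInter ▸ isClosed_biInter fun u _ => isClosed_Iic

theorem DirectedOn.exists_isLUB_of_isCompact_Icc [ClosedIicTopology α] [ClosedIciTopology α]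
    {S : Set α} (hdir : DirectedOn (· ≤ ·) S) {a b : α} (ha : a ∈ S) (hb : b ∈ upperBounds S)
    (hK : IsCompact (Icc a b)) : ∃ d, IsLUB S d := by
  set K := Icc a b ∩ lowerBounds (upperBounds S)
  have hK_compact : IsCompact K := hK.inter_right (isClosed_lowerBounds _)
  have hK_closed : IsClosed K :=
    (Ici_inter_Iic (a := a) (b := b) ▸ isClosed_Ici.inter isClosed_Iic).inter
      (isClosed_lowerBounds _)
  have : Nonempty S := ⟨⟨a, ha⟩⟩
  have hdirected : Directed (· ⊇ ·) fun s : S => K ∩ Ici s.1 := by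
    rintro ⟨s, hs⟩ ⟨t, ht⟩
    obtain ⟨u, hu, hsu, htu⟩ := hdir s hs t ht
    exact ⟨⟨u, hu⟩, inter_subset_inter_right _ (Ici_subset_Ici.2 hsu),
      inter_subset_inter_right _ (Ici_subset_Ici.2 htu)⟩
  have hnonempty : ∀ s : S, (K ∩ Ici s.1).Nonempty := by
    rintro ⟨s, hs⟩
    obtain ⟨u, hu, hau, hsu⟩ := hdir a ha s hs
    exact ⟨u, ⟨⟨hau, hb hu⟩, fun _ hv => hv hu⟩, hsu⟩
  obtain ⟨d, hd⟩ := IsCompact.nonempty_iInter_of_directed_nonempty_isCompact_isClosed _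
    hdirected hnonempty (fun _ => hK_compact.inter_right isClosed_Ici)
    (fun _ => hK_closed.inter isClosed_Ici)
  rw [mem_iInter] at hd
  exact ⟨d, fun s hs => (hd ⟨s, hs⟩).2, (hd ⟨a, ha⟩).1.2⟩

end OrderTopology

section WayBelow

variable {α : Type*} [Preorder α]

theorem wayBelow.le {a x : α} (h : wayBelow a x) : a ≤ x := by
  obtain ⟨s, rfl, hle⟩ := h {x} (singleton_nonempty x) (directedOn_singleton x) x
    isLUB_singleton le_rfl
  exact hle

theorem ContinuousPoset.exists_wayBelow (h : ContinuousPoset α) (x : α) : ∃ c, wayBelow c x :=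
  let ⟨_, hsub, ⟨c, hc⟩, _⟩ := h x
  ⟨c, hsub hc⟩

/-- If nothing is way above `x`, then `x = ⋀ ∅` is a top element, which is way below itself. -/
theorem Bicontinuous.exists_wayBelow_right (h : Bicontinuous α) (x : α) : ∃ d, wayBelow x d := by
  by_contra! hnone
  have hx_top : ∀ z : α, z ≤ x := fun z => (h.2.2 x).2.2 fun y hy => (hnone y hy).elim
  exact hnone x ((h.2.1 x x).2 fun T ⟨t, ht⟩ _ _ _ _ => ⟨t, ht, hx_top t⟩)

theorem isOpen_intervalTop_of_forall {C : Set α}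
    (h : ∀ x ∈ C, ∃ c d, wayBelow c x ∧ wayBelow x d ∧ {z | wayBelow c z ∧ wayBelow z d} ⊆ C) :
    @IsOpen α (intervalTop α) C := by
  let := intervalTop α
  refine isOpen_iff_forall_mem_open.2 fun x hx => ?_
  obtain ⟨c, d, hcx, hxd, hsub⟩ := h x hx
  exact ⟨_, hsub, TopologicalSpace.GenerateOpen.basic _ ⟨c, d, rfl⟩, hcx, hxd⟩

theorem Bicontinuous.closedIciTopology (h : Bicontinuous α) :
    @ClosedIciTopology α (intervalTop α) _ := by
  let := intervalTop α
  refine ⟨fun s => isOpen_compl_iff.1 (isOpen_intervalTop_of_forall fun x hx => ?_)⟩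
  obtain ⟨c, hcx⟩ := h.1.exists_wayBelow x
  obtain ⟨d, hxd, hsd⟩ : ∃ d, wayBelow x d ∧ ¬s ≤ d := by
    by_contra! hall
    exact hx ((h.2.2 x).2.2 hall)
  exact ⟨c, d, hcx, hxd, fun z hz hsz => hsd (le_trans hsz hz.2.le)⟩

theorem Bicontinuous.closedIicTopology (h : Bicontinuous α) :
    @ClosedIicTopology α (intervalTop α) _ := by
  let := intervalTop α
  refine ⟨fun u => isOpen_compl_iff.1 (isOpen_intervalTop_of_forall fun x hx => ?_)⟩
  obtain ⟨D, hD, -, -, hlub⟩ := h.1 x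
  obtain ⟨c, hcD, hcu⟩ : ∃ c ∈ D, ¬c ≤ u := by
    by_contra! hall
    exact hx (hlub.2 hall)
  obtain ⟨d, hxd⟩ := h.exists_wayBelow_right x
  exact ⟨c, d, hD hcD, hxd, fun z hz hzu => hcu (le_trans hz.1.le hzu)⟩

end WayBelow

/-- in a globally hyperbolic poset, every directed set with an upper
bound has a supremum. -/
theorem directed_bounded_has_sup {α : Type*} [PartialOrder α]
    (h : GloballyHyperbolic α) (S : Set α) (hne : S.Nonempty)
    (hdir : DirectedOn (· ≤ ·) S) (b : α) (hb : b ∈ upperBounds S) :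
    ∃ d : α, IsLUB S d := by
  let := intervalTop α
  have := h.1.closedIciTopology
  have := h.1.closedIicTopology
  obtain ⟨a, ha⟩ := hne
  exact hdir.exists_isLUB_of_isCompact_Icc ha hb (h.2 a b)
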